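/- For all A ∈ SL₂±(ℝ): ‖A²‖₂ ≤ 2·ρ(A)·‖A‖₂, where ‖·‖₂ is the Euclidean operator norm and ρ the spectral radius. -/

import Mathlib

/-!
By Cayley–Hamilton `A * A = t • A - d • 1` with `t = tr A` and `d = det A = ±1`, so the squared
Frobenius norm of `A * A`, which bounds `‖A * A‖₂²`, is `t² F - 2 d t² + 2` with `F = ‖A‖_F²`.
The singular values of `A` are `s = ‖A‖₂` and `1 / s`, whence `F ≤ s² + s⁻²`; the eigenvalues of
`A` have product `d`, whence `1 ≤ ρ ≤ s` and `|t| ≤ ρ + d / ρ`. What remains is a polynomial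
inequality in `1 ≤ ρ² ≤ s²`.
-/

open Complex Matrix UpperHalfPlane

lemma im_moebius_aux (a b c d : ℝ) (z : ℂ) (hz : z.im ≠ 0) (hdet : a * d - b * c ≠ 0) :
    (((a : ℂ) * z + b) / ((c : ℂ) * z + d)).im
      = (a * d - b * c) * z.im / Complex.normSq ((c : ℂ) * z + d) := by
  have hden : ((c : ℂ) * z + d) ≠ 0 := by
    intro h
    have him : c * z.im = 0 := by
      have := congrArg Complex.im h
      simpa using this
    have hc : c = 0 := by
      rcases mul_eq_zero.1 him with h' | h'
      · exact h'
      · exact absurd h' hz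
    have hre : c * z.re + d = 0 := by
      have := congrArg Complex.re h
      simpa using this
    have hd : d = 0 := by simpa [hc] using hre
    exact hdet (by simp [hc, hd])
  rw [Complex.div_im]
  have hnsq : Complex.normSq ((c : ℂ) * z + d) ≠ 0 := by
    simpa [Complex.normSq_eq_zero] using hden
  rw [← sub_div]
  congr 1
  simp only [add_im, add_re, mul_im, mul_re, ofReal_re, ofReal_im]
  ring

lemma im_moebius_pos (a b c d : ℝ) (z : ℂ) (hz : z.im ≠ 0)
    (hdet : 0 < (a * d - b * c) * z.im) :
    0 < (((a : ℂ) * z + b) / ((c : ℂ) * z + d)).im := by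
  have hdet' : a * d - b * c ≠ 0 := by
    intro h; rw [h] at hdet; simp at hdet
  rw [im_moebius_aux a b c d z hz hdet']
  have hden : ((c : ℂ) * z + d) ≠ 0 := by
    intro h
    have him : c * z.im = 0 := by
      have := congrArg Complex.im h
      simpa using this
    have hc : c = 0 := by
      rcases mul_eq_zero.1 him with h' | h'
      · exact h'
      · exact absurd h' hz
    have hre : c * z.re + d = 0 := by
      have := congrArg Complex.re h
      simpa using this
    have hd : d = 0 := by simpa [hc] using hre
    exact hdet' (by simp [hc, hd])
  have : 0 < Complex.normSq ((c : ℂ) * z + d) := Complex.normSq_pos.2 hden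
  positivity

/-- The (anti-)Möbius action of a matrix with determinant `±1` on `ℂ`:
`z ↦ (az+b)/(cz+d)` if `det = 1`, and `z ↦ (az̄+b)/(cz̄+d)` otherwise. -/
noncomputable def moebiusMap (A : Matrix (Fin 2) (Fin 2) ℝ) (z : ℂ) : ℂ :=
  if A.det = 1 then
    ((A 0 0 : ℂ) * z + A 0 1) / ((A 1 0 : ℂ) * z + A 1 1)
  else
    ((A 0 0 : ℂ) * (starRingEnd ℂ z) + A 0 1) / ((A 1 0 : ℂ) * (starRingEnd ℂ z) + A 1 1)

lemma moebiusMap_im_pos (A : Matrix (Fin 2) (Fin 2) ℝ)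
    (hA : A.det = 1 ∨ A.det = -1) (z : ℍ) : 0 < (moebiusMap A (z : ℂ)).im := by
  have hdet2 : A.det = A 0 0 * A 1 1 - A 0 1 * A 1 0 := Matrix.det_fin_two A
  by_cases hd : A.det = 1
  · rw [moebiusMap, if_pos hd]
    apply im_moebius_pos _ _ _ _ _ (ne_of_gt z.2)
    rw [← hdet2, hd]
    simpa using z.2
  · rw [moebiusMap, if_neg hd]
    have hdm : A.det = -1 := hA.resolve_left hd
    have hzc : ((starRingEnd ℂ) (z : ℂ)).im = -(z : ℂ).im := by simp
    apply im_moebius_pos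
    · rw [hzc]; simpa using ne_of_gt z.2
    · rw [hzc, ← hdet2, hdm]; simpa using z.2

/-- The isometry of the hyperbolic plane `ℍ` induced by a matrix of
determinant `±1` (for other matrices we take the identity as junk value). -/
noncomputable def moebius (A : Matrix (Fin 2) (Fin 2) ℝ) (z : ℍ) : ℍ :=
  if h : A.det = 1 ∨ A.det = -1 then ⟨moebiusMap A (z : ℂ), moebiusMap_im_pos A h z⟩
  else z

/-- The Euclidean operator norm of a `2 × 2` real matrix. -/
noncomputable def l2OpNorm (A : Matrix (Fin 2) (Fin 2) ℝ) : ℝ :=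
  ‖Matrix.toEuclideanCLM (𝕜 := ℝ) A‖

/-- The spectral radius of a real matrix (computed over `ℂ`, so that complex
eigenvalues are taken into account). -/
noncomputable def specRad (A : Matrix (Fin 2) (Fin 2) ℝ) : ℝ :=
  (spectralRadius ℂ (A.map (algebraMap ℝ ℂ))).toReal

namespace Matrix

lemma mem_spectrum_iff_fin_two {K : Type*} [Field K] (A : Matrix (Fin 2) (Fin 2) K) (z : K) :
    z ∈ spectrum K A ↔ z ^ 2 - A.trace * z + A.det = 0 := by
  rw [mem_spectrum_iff_isRoot_charpoly, charpoly_fin_two]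
  simp

lemma sq_sqrt_discr_fin_two {A : Matrix (Fin 2) (Fin 2) ℝ} (hΔ : 0 ≤ A.discr) :
    √A.discr ^ 2 = A.trace ^ 2 - 4 * A.det := by
  rw [Real.sq_sqrt hΔ, discr_fin_two]

variable {n : Type*} [Fintype n] [DecidableEq n]

lemma abs_le_norm_toEuclideanCLM_of_mem_spectrum {A : Matrix n n ℝ} {μ : ℝ}
    (hμ : μ ∈ spectrum ℝ A) : |μ| ≤ ‖toEuclideanCLM (𝕜 := ℝ) A‖ := by
  rw [← spectrum_toLin', ← Module.End.hasEigenvalue_iff_mem_spectrum] at hμ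
  obtain ⟨v, hv⟩ := hμ.exists_hasEigenvector
  have hAv : A *ᵥ v = μ • v := by simpa using hv.apply_eq_smul
  have hv₀ : 0 < ‖WithLp.toLp 2 v‖ := by simpa using hv.2
  have := (toEuclideanCLM (𝕜 := ℝ) A).le_opNorm (WithLp.toLp 2 v)
  rw [toEuclideanCLM_toLp, hAv, WithLp.toLp_smul, norm_smul, Real.norm_eq_abs] at this
  exact le_of_mul_le_mul_right this hv₀

lemma norm_toEuclideanCLM_sq_le_sum_sq (A : Matrix n n ℝ) :
    ‖toEuclideanCLM (𝕜 := ℝ) A‖ ^ 2 ≤ ∑ i, ∑ j, A i j ^ 2 := by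
  rw [← Real.le_sqrt (norm_nonneg _) (by positivity)]
  refine ContinuousLinearMap.opNorm_le_bound _ (Real.sqrt_nonneg _) fun x ↦ ?_
  rw [← Real.sqrt_sq (norm_nonneg _), ← Real.sqrt_sq (norm_nonneg x),
    ← Real.sqrt_mul (by positivity)]
  refine Real.sqrt_le_sqrt ?_
  rw [EuclideanSpace.norm_sq_eq, EuclideanSpace.norm_sq_eq, Finset.sum_mul]
  refine Finset.sum_le_sum fun i _ ↦ ?_
  simpa [mulVec, dotProduct] using Finset.sum_mul_sq_le_sq_mul_sq Finset.univ (A i) x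

end Matrix

open scoped Matrix.Norms.L2Operator in
lemma l2OpNorm_transpose_mul_self (A : Matrix (Fin 2) (Fin 2) ℝ) :
    l2OpNorm (Aᵀ * A) = l2OpNorm A ^ 2 := by
  rw [sq, ← conjTranspose_eq_transpose_of_trivial]
  exact l2_opNorm_conjTranspose_mul_self A

lemma two_mul_abs_det_le_sum_sq (A : Matrix (Fin 2) (Fin 2) ℝ) :
    2 * |A.det| ≤ ∑ i, ∑ j, A i j ^ 2 := by
  simp only [det_fin_two, Fin.sum_univ_two]
  rcases abs_cases (A 0 0 * A 1 1 - A 0 1 * A 1 0) with ⟨h, -⟩ | ⟨h, -⟩ <;> rw [h] <;>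
    nlinarith [sq_nonneg (A 0 0 - A 1 1), sq_nonneg (A 0 0 + A 1 1),
      sq_nonneg (A 0 1 + A 1 0), sq_nonneg (A 0 1 - A 1 0)]

lemma sq_sqrt_sum_sq_sq_sub_four_mul_det_sq (A : Matrix (Fin 2) (Fin 2) ℝ) :
    √((∑ i, ∑ j, A i j ^ 2) ^ 2 - 4 * A.det ^ 2) ^ 2
      = (∑ i, ∑ j, A i j ^ 2) ^ 2 - 4 * A.det ^ 2 := by
  have := two_mul_abs_det_le_sum_sq A
  exact Real.sq_sqrt (by nlinarith [abs_nonneg A.det, sq_abs A.det])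

-- The larger root of `X² - F X + det A²` (`F = ∑ i, ∑ j, A i j ^ 2`), the characteristic
-- polynomial of `Aᵀ * A`.
lemma top_eigenvalue_le_l2OpNorm_sq (A : Matrix (Fin 2) (Fin 2) ℝ) :
    ((∑ i, ∑ j, A i j ^ 2) + √((∑ i, ∑ j, A i j ^ 2) ^ 2 - 4 * A.det ^ 2)) / 2
      ≤ l2OpNorm A ^ 2 := by
  set F := ∑ i, ∑ j, A i j ^ 2
  have htrace : (Aᵀ * A).trace = F := by
    simp only [F, trace_fin_two, mul_apply, transpose_apply, Fin.sum_univ_two]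
    ring
  have hdet : (Aᵀ * A).det = A.det ^ 2 := by rw [det_mul, det_transpose, sq]
  have hmem : (F + √(F ^ 2 - 4 * A.det ^ 2)) / 2 ∈ spectrum ℝ (Aᵀ * A) := by
    rw [mem_spectrum_iff_fin_two, htrace, hdet]
    linear_combination sq_sqrt_sum_sq_sq_sub_four_mul_det_sq A / 4
  calc _ ≤ |(F + √(F ^ 2 - 4 * A.det ^ 2)) / 2| := le_abs_self _
    _ ≤ l2OpNorm (Aᵀ * A) := abs_le_norm_toEuclideanCLM_of_mem_spectrum hmem
    _ = l2OpNorm A ^ 2 := l2OpNorm_transpose_mul_self A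

lemma abs_det_le_l2OpNorm_sq (A : Matrix (Fin 2) (Fin 2) ℝ) : |A.det| ≤ l2OpNorm A ^ 2 := by
  have := top_eigenvalue_le_l2OpNorm_sq A
  have := two_mul_abs_det_le_sum_sq A
  have := Real.sqrt_nonneg ((∑ i, ∑ j, A i j ^ 2) ^ 2 - 4 * A.det ^ 2)
  linarith

-- `s⁴ - F s² + det A² = (s² - λ₊) (s² - λ₋)`, where `λ₋ ≤ λ₊ ≤ s²` are the eigenvalues of `Aᵀ * A`.
lemma sum_sq_mul_l2OpNorm_sq_le (A : Matrix (Fin 2) (Fin 2) ℝ) :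
    (∑ i, ∑ j, A i j ^ 2) * l2OpNorm A ^ 2 ≤ l2OpNorm A ^ 4 + A.det ^ 2 := by
  have := top_eigenvalue_le_l2OpNorm_sq A
  have := sq_sqrt_sum_sq_sq_sub_four_mul_det_sq A
  nlinarith [Real.sqrt_nonneg ((∑ i, ∑ j, A i j ^ 2) ^ 2 - 4 * A.det ^ 2)]

lemma specRad_eq_max_norm {A : Matrix (Fin 2) (Fin 2) ℝ} {r₁ r₂ : ℂ}
    (hsum : r₁ + r₂ = A.trace) (hprod : r₁ * r₂ = A.det) : specRad A = max ‖r₁‖ ‖r₂‖ := by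
  have htrace : (A.map (algebraMap ℝ ℂ)).trace = A.trace := by simp [trace_fin_two]
  have hdet : (A.map (algebraMap ℝ ℂ)).det = A.det := by simp [det_fin_two]
  have hspec : spectrum ℂ (A.map (algebraMap ℝ ℂ)) = {r₁, r₂} := by
    ext z
    have hfac : z ^ 2 - A.trace * z + A.det = (z - r₁) * (z - r₂) := by
      linear_combination z * hsum - hprod
    rw [mem_spectrum_iff_fin_two, htrace, hdet, hfac, mul_eq_zero, sub_eq_zero, sub_eq_zero,
      Set.mem_insert_iff, Set.mem_singleton_iff]
  rw [specRad, spectralRadius, hspec, iSup_insert, iSup_singleton]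
  simp [ENNReal.toReal_max]

lemma specRad_of_discr_nonneg {A : Matrix (Fin 2) (Fin 2) ℝ} (hΔ : 0 ≤ A.discr) :
    specRad A = max |(A.trace + √A.discr) / 2| |(A.trace - √A.discr) / 2| := by
  rw [specRad_eq_max_norm (r₁ := ((A.trace + √A.discr) / 2 : ℝ))
    (r₂ := ((A.trace - √A.discr) / 2 : ℝ)), Complex.norm_real, Complex.norm_real,
    Real.norm_eq_abs, Real.norm_eq_abs]
  · push_cast
    ring
  · rw [← Complex.ofReal_mul]
    congr 1
    linear_combination -sq_sqrt_discr_fin_two hΔ / 4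

lemma specRad_of_discr_neg {A : Matrix (Fin 2) (Fin 2) ℝ} (hΔ : A.discr < 0) :
    specRad A = √A.det := by
  rw [discr_fin_two] at hΔ
  set y := √(4 * A.det - A.trace ^ 2)
  have hy : y ^ 2 = 4 * A.det - A.trace ^ 2 := Real.sq_sqrt (by linarith)
  have hnorm (ε : ℝ) (hε : ε ^ 2 = 1) :
      ‖(A.trace / 2 : ℝ) + (ε * y / 2 : ℝ) * Complex.I‖ = √A.det := by
    rw [Complex.norm_add_mul_I]
    congr 1
    linear_combination hy / 4 + y ^ 2 / 4 * hε
  rw [specRad_eq_max_norm (r₁ := (A.trace / 2 : ℝ) + (1 * y / 2 : ℝ) * Complex.I)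
    (r₂ := (A.trace / 2 : ℝ) + (-1 * y / 2 : ℝ) * Complex.I), hnorm 1 (by norm_num),
    hnorm (-1) (by norm_num), max_self]
  · push_cast
    ring
  · have hyC : (y : ℂ) ^ 2 = 4 * A.det - A.trace ^ 2 := by exact_mod_cast hy
    push_cast
    linear_combination (1 / 4 : ℂ) * hyC - (y ^ 2 / 4 : ℂ) * Complex.I_sq

lemma abs_add_mul_le_sq_add_mul {a b x : ℝ} (ha : |a| ≤ x) (hb : |b| ≤ x) :
    |a + b| * x ≤ x ^ 2 + a * b := by
  obtain ⟨ha₁, ha₂⟩ := abs_le.1 ha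
  obtain ⟨hb₁, hb₂⟩ := abs_le.1 hb
  rcases abs_cases (a + b) with ⟨h, -⟩ | ⟨h, -⟩ <;> rw [h]
  · nlinarith [mul_nonneg (sub_nonneg.2 ha₂) (sub_nonneg.2 hb₂)]
  · nlinarith [mul_nonneg (neg_le_iff_add_nonneg.1 ha₁) (neg_le_iff_add_nonneg.1 hb₁)]

lemma specRad_le_l2OpNorm (A : Matrix (Fin 2) (Fin 2) ℝ) : specRad A ≤ l2OpNorm A := by
  rcases le_or_gt 0 A.discr with hΔ | hΔ
  · rw [specRad_of_discr_nonneg hΔ]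
    refine max_le (abs_le_norm_toEuclideanCLM_of_mem_spectrum ?_)
      (abs_le_norm_toEuclideanCLM_of_mem_spectrum ?_) <;>
    · rw [mem_spectrum_iff_fin_two]
      linear_combination sq_sqrt_discr_fin_two hΔ / 4
  · rw [specRad_of_discr_neg hΔ]
    exact Real.sqrt_le_iff.2 ⟨norm_nonneg _, (le_abs_self _).trans (abs_det_le_l2OpNorm_sq A)⟩

lemma abs_det_le_specRad_sq (A : Matrix (Fin 2) (Fin 2) ℝ) : |A.det| ≤ specRad A ^ 2 := by
  rcases le_or_gt 0 A.discr with hΔ | hΔ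
  · have hρ := specRad_of_discr_nonneg hΔ
    set r₁ := (A.trace + √A.discr) / 2
    set r₂ := (A.trace - √A.discr) / 2
    have hr₁ : |r₁| ≤ specRad A := hρ ▸ le_max_left _ _
    have hr₂ : |r₂| ≤ specRad A := hρ ▸ le_max_right _ _
    calc |A.det| = |r₁| * |r₂| := by
          rw [← abs_mul]
          congr 1
          linear_combination sq_sqrt_discr_fin_two hΔ / 4
      _ ≤ specRad A ^ 2 := by
          rw [sq]
          exact mul_le_mul hr₁ hr₂ (abs_nonneg _) ((abs_nonneg _).trans hr₁)
  · have hdet : 0 ≤ A.det := by rw [discr_fin_two] at hΔ; nlinarith [sq_nonneg A.trace]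
    rw [specRad_of_discr_neg hΔ, Real.sq_sqrt hdet, abs_of_nonneg hdet]

lemma abs_trace_mul_specRad_le (A : Matrix (Fin 2) (Fin 2) ℝ) :
    |A.trace| * specRad A ≤ specRad A ^ 2 + A.det := by
  rcases le_or_gt 0 A.discr with hΔ | hΔ
  · rw [specRad_of_discr_nonneg hΔ]
    convert abs_add_mul_le_sq_add_mul (le_max_left _ _) (le_max_right _ _) using 3
    · ring
    · linear_combination sq_sqrt_discr_fin_two hΔ / 4
  · rw [discr_fin_two] at hΔ
    have hdet : 0 ≤ A.det := by nlinarith [sq_nonneg A.trace]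
    have ht : |A.trace| ≤ 2 * √A.det :=
      abs_le_of_sq_le_sq (by rw [mul_pow, Real.sq_sqrt hdet]; linarith) (by positivity)
    rw [specRad_of_discr_neg (by rwa [discr_fin_two]), Real.sq_sqrt hdet]
    nlinarith [Real.sq_sqrt hdet, Real.sqrt_nonneg A.det]

-- Cayley–Hamilton: `A * A = A.trace • A - A.det • 1`.
lemma sum_sq_mul_self (A : Matrix (Fin 2) (Fin 2) ℝ) :
    ∑ i, ∑ j, (A * A) i j ^ 2
      = A.trace ^ 2 * (∑ i, ∑ j, A i j ^ 2) - 2 * A.det * A.trace ^ 2 + 2 * A.det ^ 2 := by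
  simp only [mul_apply, Fin.sum_univ_two, trace_fin_two, det_fin_two]
  ring

lemma sq_add_mul_sub_le {d p q : ℝ} (hd : d = 1 ∨ d = -1) (hp : 1 ≤ p) (hpq : p ≤ q) :
    ((p + d) * (q - d)) ^ 2 ≤ (4 * p * q - 2) * (p * q) := by
  rcases hd with rfl | rfl <;> nlinarith [mul_le_mul_of_nonneg_left hp (by linarith : (0 : ℝ) ≤ q)]

-- `t, d, F, ρ, s` stand for `tr A, det A, ‖A‖_F², ρ(A), ‖A‖₂`.
lemma sq_mul_sub_add_le {t d F ρ s : ℝ} (hd : d = 1 ∨ d = -1) (hρ : 1 ≤ ρ) (hρs : ρ ≤ s)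
    (ht : |t| * ρ ≤ ρ ^ 2 + d) (hF : F * s ^ 2 ≤ s ^ 4 + d ^ 2) (hFd : 2 * |d| ≤ F) :
    t ^ 2 * F - 2 * d * t ^ 2 + 2 * d ^ 2 ≤ (2 * ρ * s) ^ 2 := by
  have hd2 : d ^ 2 = 1 := by rcases hd with rfl | rfl <;> norm_num
  have hFd' : 0 ≤ F - 2 * d := by rcases hd with rfl | rfl <;> norm_num at hFd <;> linarith
  have hρ2 : t ^ 2 * ρ ^ 2 ≤ (ρ ^ 2 + d) ^ 2 := by
    rw [← sq_abs t, ← mul_pow]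
    exact pow_le_pow_left₀ (by positivity) ht 2
  have hs2 : (F - 2 * d) * s ^ 2 ≤ (s ^ 2 - d) ^ 2 := by nlinarith
  have hprod : t ^ 2 * (F - 2 * d) * (ρ ^ 2 * s ^ 2) ≤ ((ρ ^ 2 + d) * (s ^ 2 - d)) ^ 2 := by
    calc _ = (t ^ 2 * ρ ^ 2) * ((F - 2 * d) * s ^ 2) := by ring
      _ ≤ (ρ ^ 2 + d) ^ 2 * (s ^ 2 - d) ^ 2 := mul_le_mul hρ2 hs2 (by positivity) (sq_nonneg _)
      _ = _ := by ring
  have hpos : 0 < ρ ^ 2 * s ^ 2 := mul_pos (pow_pos (by linarith) 2) (pow_pos (by linarith) 2)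
  have : t ^ 2 * (F - 2 * d) ≤ 4 * ρ ^ 2 * s ^ 2 - 2 := le_of_mul_le_mul_right
    (hprod.trans (sq_add_mul_sub_le hd (by nlinarith) (by nlinarith))) hpos
  nlinarith

/-- For all `A ∈ SL₂±(ℝ)`: `‖A²‖₂ ≤ 2 ρ(A) ‖A‖₂`. -/
theorem stmt15 (A : Matrix (Fin 2) (Fin 2) ℝ) (hA : A.det = 1 ∨ A.det = -1) :
    l2OpNorm (A * A) ≤ 2 * specRad A * l2OpNorm A := by
  have hρ₀ : 0 ≤ specRad A := ENNReal.toReal_nonneg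
  have hρ : 1 ≤ specRad A := (one_le_sq_iff₀ hρ₀).1 <| by
    rcases hA with h | h <;> simpa [h] using abs_det_le_specRad_sq A
  refine le_of_pow_le_pow_left₀ two_ne_zero
    (mul_nonneg (mul_nonneg zero_le_two hρ₀) (norm_nonneg _)) ?_
  calc l2OpNorm (A * A) ^ 2 ≤ ∑ i, ∑ j, (A * A) i j ^ 2 := norm_toEuclideanCLM_sq_le_sum_sq _
    _ = _ := sum_sq_mul_self A
    _ ≤ (2 * specRad A * l2OpNorm A) ^ 2 :=
      sq_mul_sub_add_le hA hρ (specRad_le_l2OpNorm A) (abs_trace_mul_specRad_le A)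
        (sum_sq_mul_l2OpNorm_sq_le A) (two_mul_abs_det_le_sum_sq A)
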